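/- arXiv:1808.03610 — 4 statements merged into one kernel-verified Lean document; each statement's English description precedes it below -/
import Mathlib

section
/- Fix real t < T and x, set τ = T − t, and let f(σ) = BS(t,x,x,σ) for σ > 0, with inverse function g : (0, e^x) → (0,∞). Then for every v ∈ (0, e^x), g is twice differentiable at v with g″(v) = g(v) / (4 · (e^x · φ(g(v)·√τ/2))²). -/
open Real MeasureTheory Filter Set
open scoped Topology

/-- Standard normal cumulative distribution function. -/
noncomputable def stdNormalCDF (z : ℝ) : ℝ :=
  ∫ u in Set.Iic z, Real.exp (-u ^ 2 / 2) / Real.sqrt (2 * Real.pi)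

/-- Standard normal density. -/
noncomputable def stdNormalPDF (z : ℝ) : ℝ :=
  Real.exp (-z ^ 2 / 2) / Real.sqrt (2 * Real.pi)

/-- d₊ in the Black–Scholes formula (maturity `T`, time `t`, log-spot `x`, log-strike `k`). -/
noncomputable def dplus (T t x k σ : ℝ) : ℝ :=
  (x - k) / (σ * Real.sqrt (T - t)) + σ * Real.sqrt (T - t) / 2

/-- d₋ in the Black–Scholes formula. -/
noncomputable def dminus (T t x k σ : ℝ) : ℝ :=
  (x - k) / (σ * Real.sqrt (T - t)) - σ * Real.sqrt (T - t) / 2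

/-- Black–Scholes call price with time to maturity `T - t`, log-spot `x`,
log-strike `k` and volatility `σ`. -/
noncomputable def BS (T t x k σ : ℝ) : ℝ :=
  Real.exp x * stdNormalCDF (dplus T t x k σ) - Real.exp k * stdNormalCDF (dminus T t x k σ)

/- The at-the-money price f(σ) = e^x (N(σ√τ/2) − N(−σ√τ/2)) has the nonvanishing strict derivative
(vega) f'(σ) = e^x √τ φ(σ√τ/2), so the inverse function theorem makes g differentiable with
g' = 1 / f'(g). Differentiating once more, g'' = −f''(g) / f'(g)³, and φ'(z) = −z φ(z) turns this
into g / (4 (e^x φ(g√τ/2))²). -/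

lemma stdNormalPDF_pos (z : ℝ) : 0 < stdNormalPDF z :=
  div_pos (exp_pos _) (sqrt_pos.2 (by positivity))

lemma stdNormalPDF_neg (z : ℝ) : stdNormalPDF (-z) = stdNormalPDF z := by
  simp [stdNormalPDF]

lemma continuous_stdNormalPDF : Continuous stdNormalPDF := by
  unfold stdNormalPDF; fun_prop

lemma hasDerivAt_stdNormalPDF (z : ℝ) : HasDerivAt stdNormalPDF (-z * stdNormalPDF z) z := by
  have hexponent : HasDerivAt (fun z : ℝ => -z ^ 2 / 2) (-z) z :=
    (((hasDerivAt_pow 2 z).neg).div_const 2).congr_deriv (by push_cast; ring)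
  refine (hexponent.exp.div_const (sqrt (2 * π))).congr_deriv ?_
  simp only [stdNormalPDF]
  ring

lemma integrable_stdNormalPDF : Integrable stdNormalPDF := by
  have h : Integrable fun u : ℝ => exp (-(1 / 2) * u ^ 2) / sqrt (2 * π) :=
    (integrable_exp_neg_mul_sq (by norm_num)).div_const _
  refine h.congr (.of_forall fun u => ?_)
  simp only [stdNormalPDF]
  ring_nf

lemma stdNormalCDF_eq_integral (z : ℝ) : stdNormalCDF z = ∫ u in Iic z, stdNormalPDF u := rfl

lemma hasStrictDerivAt_stdNormalCDF (z : ℝ) :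
    HasStrictDerivAt stdNormalCDF (stdNormalPDF z) z := by
  have hCDF : stdNormalCDF = fun w => stdNormalCDF 0 + ∫ u in (0 : ℝ)..w, stdNormalPDF u := by
    funext w
    rw [stdNormalCDF_eq_integral, stdNormalCDF_eq_integral,
      ← intervalIntegral.integral_Iic_sub_Iic integrable_stdNormalPDF.integrableOn
      integrable_stdNormalPDF.integrableOn]
    ring
  rw [hCDF]
  simpa using continuous_stdNormalPDF.integral_hasStrictDerivAt 0 z

theorem hasDerivAt_deriv_of_eventually_hasDerivAt_inv_comp {𝕜 : Type*} [NontriviallyNormedField 𝕜]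
    {g f' : 𝕜 → 𝕜} {f'' v : 𝕜} (hg : ∀ᶠ y in 𝓝 v, HasDerivAt g (f' (g y))⁻¹ y)
    (hf' : HasDerivAt f' f'' (g v)) (h0 : f' (g v) ≠ 0) :
    HasDerivAt (deriv g) (-f'' / f' (g v) ^ 3) v := by
  have hderiv : deriv g =ᶠ[𝓝 v] fun y => (f' (g y))⁻¹ := hg.mono fun _ hy => hy.deriv
  have hcomp : HasDerivAt (fun y => f' (g y)) (f'' * (f' (g v))⁻¹) v :=
    hf'.comp v hg.self_of_nhds
  refine (hcomp.inv h0).congr_of_eventuallyEq hderiv |>.congr_deriv ?_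
  field_simp

lemma BS_atm (T t x σ : ℝ) :
    BS T t x x σ = exp x * (stdNormalCDF (σ * sqrt (T - t) / 2) -
      stdNormalCDF (-(σ * sqrt (T - t) / 2))) := by
  simp only [BS, dplus, dminus, sub_self, zero_div, zero_add, zero_sub]
  ring

noncomputable def atmVega (T t x σ : ℝ) : ℝ :=
  exp x * sqrt (T - t) * stdNormalPDF (σ * sqrt (T - t) / 2)

lemma atmVega_pos {T t : ℝ} (ht : t < T) (x σ : ℝ) : 0 < atmVega T t x σ := by
  have := stdNormalPDF_pos (σ * sqrt (T - t) / 2)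
  have := sqrt_pos.2 (sub_pos.2 ht)
  unfold atmVega
  positivity

lemma hasStrictDerivAt_BS_atm (T t x σ : ℝ) :
    HasStrictDerivAt (BS T t x x) (atmVega T t x σ) σ := by
  have hd : HasStrictDerivAt (fun σ : ℝ => σ * sqrt (T - t) / 2) (sqrt (T - t) / 2) σ := by
    simpa using ((hasStrictDerivAt_id σ).mul_const (sqrt (T - t))).div_const 2
  have hBS := (((hasStrictDerivAt_stdNormalCDF _).comp σ hd).sub
    ((hasStrictDerivAt_stdNormalCDF _).comp σ hd.neg)).const_mul (exp x)
  rw [funext (BS_atm T t x)]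
  refine hBS.congr_deriv ?_
  simp only [atmVega, Pi.neg_apply, stdNormalPDF_neg]
  ring

lemma hasDerivAt_atmVega (T t x σ : ℝ) :
    HasDerivAt (atmVega T t x)
      (-(exp x * sqrt (T - t) ^ 3 * σ * stdNormalPDF (σ * sqrt (T - t) / 2)) / 4) σ := by
  have hd : HasDerivAt (fun σ : ℝ => σ * sqrt (T - t) / 2) (sqrt (T - t) / 2) σ := by
    simpa using ((hasDerivAt_id σ).mul_const (sqrt (T - t))).div_const 2
  refine (((hasDerivAt_stdNormalPDF _).comp σ hd).const_mul
    (exp x * sqrt (T - t))).congr_deriv ?_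
  ring

/-- the inverse `g = BS⁻¹` of the at-the-money price is twice
differentiable on `(0, e^x)` with `g″(v) = g(v)/(4 (e^x φ(g(v)√τ/2))²)`. -/
theorem BS_inv_deriv2 (T t x : ℝ) (ht : t < T) (g : ℝ → ℝ)
    (hg_left : ∀ σ : ℝ, 0 < σ → g (BS T t x x σ) = σ)
    (hg_right : ∀ v ∈ Set.Ioo (0 : ℝ) (Real.exp x), 0 < g v ∧ BS T t x x (g v) = v) :
    ∀ v ∈ Set.Ioo (0 : ℝ) (Real.exp x),
      DifferentiableAt ℝ g v ∧
      HasDerivAt (deriv g)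
        (g v / (4 * (Real.exp x * stdNormalPDF (g v * Real.sqrt (T - t) / 2)) ^ 2)) v := by
  have hg' : ∀ v ∈ Ioo 0 (exp x), HasDerivAt g (atmVega T t x (g v))⁻¹ v := by
    intro v hv
    obtain ⟨hgv, hBS⟩ := hg_right v hv
    have hleft : ∀ᶠ σ in 𝓝 (g v), g (BS T t x x σ) = σ :=
      (eventually_gt_nhds hgv).mono hg_left
    have hinv := (hasStrictDerivAt_BS_atm T t x (g v)).to_local_left_inverse
      (atmVega_pos ht x (g v)).ne' hleft
    rw [hBS] at hinv
    exact hinv.hasDerivAt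
  intro v hv
  refine ⟨(hg' v hv).differentiableAt, ?_⟩
  refine (hasDerivAt_deriv_of_eventually_hasDerivAt_inv_comp
    (eventually_of_mem (isOpen_Ioo.mem_nhds hv) hg') (hasDerivAt_atmVega T t x (g v))
    (atmVega_pos ht x (g v)).ne').congr_deriv ?_
  have := stdNormalPDF_pos (g v * sqrt (T - t) / 2)
  have := sqrt_pos.2 (sub_pos.2 ht)
  simp only [atmVega]
  field_simp
end

section
/- For every H ∈ (0, 1/2) and every β ≥ 0, the limit lim_{T→0⁺} (1/T^{1+H}) · √( ∫_0^T ( ∫_s^T e^{−β(u−s)} (u−s)^{H−1/2} du )² ds ) exists and equals 1 / ((H + 1/2) · √(2H + 2)); in particular the limit does not depend on β. -/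
/-!
Write `a = H + 1/2`. After the substitution `v = u - s` the inner integral is `F (T - s)`, where
`F x = ∫₀ˣ e^{-βv} v^{a-1} dv`. On `[0, T]` the weight `e^{-βv}` lies between `e^{-βT}` and `1`,
so `e^{-βT} x^a / a ≤ F x ≤ x^a / a`, and the outer integral of `((T - s)^a / a)²` is explicitly
`T^{2a+1} / (a² (2a+1))`. Hence the normalized quantity lies between `e^{-βT} c` and `c`, with `c`
the claimed limit, and `e^{-βT} → 1`.
-/

open Real MeasureTheory Filter Set Topology

section

variable {a β : ℝ}

theorem integral_zero_rpow_sub_one (ha : 0 < a) (x : ℝ) :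
    ∫ v in (0:ℝ)..x, v ^ (a - 1) = x ^ a / a := by
  rw [integral_rpow (Or.inl (by linarith)), sub_add_cancel, zero_rpow ha.ne', sub_zero]

theorem intervalIntegrable_exp_mul_rpow_sub_one (ha : 0 < a) (x y : ℝ) :
    IntervalIntegrable (fun v => exp (-β * v) * v ^ (a - 1)) volume x y :=
  (intervalIntegral.intervalIntegrable_rpow' (by linarith)).continuousOn_mul (by fun_prop)

theorem integral_exp_mul_rpow_sub_one_le (ha : 0 < a) (hβ : 0 ≤ β) {x : ℝ} (hx : 0 ≤ x) :
    ∫ v in (0:ℝ)..x, exp (-β * v) * v ^ (a - 1) ≤ x ^ a / a := by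
  rw [← integral_zero_rpow_sub_one ha]
  refine intervalIntegral.integral_mono_on hx (intervalIntegrable_exp_mul_rpow_sub_one ha 0 x)
    (intervalIntegral.intervalIntegrable_rpow' (by linarith)) fun v hv => ?_
  have hexp : exp (-β * v) ≤ 1 := exp_le_one_iff.2 (by nlinarith [hv.1])
  exact mul_le_of_le_one_left (rpow_nonneg hv.1 _) hexp

theorem exp_mul_le_integral_exp_mul_rpow_sub_one (ha : 0 < a) (hβ : 0 ≤ β) {x T : ℝ}
    (hx : 0 ≤ x) (hxT : x ≤ T) :
    exp (-β * T) * (x ^ a / a) ≤ ∫ v in (0:ℝ)..x, exp (-β * v) * v ^ (a - 1) := by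
  rw [← integral_zero_rpow_sub_one ha, ← intervalIntegral.integral_const_mul]
  refine intervalIntegral.integral_mono_on hx
    ((intervalIntegral.intervalIntegrable_rpow' (by linarith)).const_mul _)
    (intervalIntegrable_exp_mul_rpow_sub_one ha 0 x) fun v hv => ?_
  have hexp : exp (-β * T) ≤ exp (-β * v) := exp_le_exp.2 (by nlinarith [hv.2])
  exact mul_le_mul_of_nonneg_right hexp (rpow_nonneg hv.1 _)

theorem integral_sq_rpow_sub (ha : 0 < a) {T : ℝ} (hT : 0 ≤ T) :
    ∫ s in (0:ℝ)..T, ((T - s) ^ a) ^ 2 = T ^ (2 * a + 1) / (2 * a + 1) := by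
  have hsq : EqOn (fun v : ℝ => (v ^ a) ^ 2) (fun v => v ^ (2 * a + 1 - 1)) (uIcc 0 T) := by
    intro v hv
    rw [uIcc_of_le hT] at hv
    simp only [add_sub_cancel_right, mul_comm (2 : ℝ) a, rpow_mul hv.1, rpow_two]
  rw [intervalIntegral.integral_comp_sub_left (fun v => (v ^ a) ^ 2), sub_self, sub_zero,
    intervalIntegral.integral_congr hsq, integral_zero_rpow_sub_one (by linarith)]

theorem sqrt_integral_sq_rpow_sub_div (ha : 0 < a) {T : ℝ} (hT : 0 ≤ T) :
    √(∫ s in (0:ℝ)..T, ((T - s) ^ a / a) ^ 2) = T ^ (a + 1 / 2) / (a * √(2 * a + 1)) := by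
  simp only [div_pow]
  rw [intervalIntegral.integral_div, integral_sq_rpow_sub ha hT,
    sqrt_eq_iff_eq_sq (by positivity) (by positivity), div_pow, mul_pow, sq_sqrt (by linarith),
    ← rpow_mul_natCast hT]
  field_simp
  ring_nf

theorem sqrt_integral_sq_le_of_le {f g : ℝ → ℝ} {x y : ℝ} (hxy : x ≤ y)
    (hf : IntervalIntegrable (fun s => f s ^ 2) volume x y)
    (hg : IntervalIntegrable (fun s => g s ^ 2) volume x y)
    (hf0 : ∀ s ∈ Icc x y, 0 ≤ f s) (hfg : ∀ s ∈ Icc x y, f s ≤ g s) :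
    √(∫ s in x..y, f s ^ 2) ≤ √(∫ s in x..y, g s ^ 2) :=
  sqrt_le_sqrt <| intervalIntegral.integral_mono_on hxy hf hg fun s hs =>
    pow_le_pow_left₀ (hf0 s hs) (hfg s hs) 2

theorem sqrt_integral_sq_kernel_bounds (ha : 0 < a) (hβ : 0 ≤ β) {T : ℝ} (hT : 0 ≤ T) :
    exp (-β * T) * (T ^ (a + 1 / 2) / (a * √(2 * a + 1))) ≤
      √(∫ s in (0:ℝ)..T, (∫ u in s..T, exp (-β * (u - s)) * (u - s) ^ (a - 1)) ^ 2) ∧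
    √(∫ s in (0:ℝ)..T, (∫ u in s..T, exp (-β * (u - s)) * (u - s) ^ (a - 1)) ^ 2) ≤
      T ^ (a + 1 / 2) / (a * √(2 * a + 1)) := by
  set F : ℝ → ℝ := fun x => ∫ v in (0:ℝ)..x, exp (-β * v) * v ^ (a - 1)
  have hinner (s : ℝ) : ∫ u in s..T, exp (-β * (u - s)) * (u - s) ^ (a - 1) = F (T - s) := by
    have := intervalIntegral.integral_comp_sub_right
      (fun v => exp (-β * v) * v ^ (a - 1)) s (a := s) (b := T)
    rwa [sub_self] at this
  have hinner_sq : Continuous fun s => F (T - s) ^ 2 :=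
    ((intervalIntegral.continuous_primitive (intervalIntegrable_exp_mul_rpow_sub_one ha) 0).comp
      (continuous_sub_left T)).pow 2
  have hmaj : Continuous fun s : ℝ => (T - s) ^ a / a := by fun_prop (disch := exact ha.le)
  have hmaj_nonneg {s : ℝ} (hs : s ∈ Icc 0 T) : 0 ≤ (T - s) ^ a / a :=
    div_nonneg (rpow_nonneg (by linarith [hs.2]) a) ha.le
  have hlower {s : ℝ} (hs : s ∈ Icc 0 T) : exp (-β * T) * ((T - s) ^ a / a) ≤ F (T - s) :=
    exp_mul_le_integral_exp_mul_rpow_sub_one ha hβ (by linarith [hs.2]) (by linarith [hs.1])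
  simp_rw [hinner, ← sqrt_integral_sq_rpow_sub_div ha hT]
  constructor
  · rw [← sqrt_sq (exp_pos (-β * T)).le, ← sqrt_mul (sq_nonneg _),
      ← intervalIntegral.integral_const_mul]
    simp_rw [← mul_pow]
    exact sqrt_integral_sq_le_of_le hT (((continuous_const.mul hmaj).pow 2).intervalIntegrable 0 T)
      (hinner_sq.intervalIntegrable 0 T) (fun s hs => mul_nonneg (exp_pos _).le (hmaj_nonneg hs))
      fun _ => hlower
  · exact sqrt_integral_sq_le_of_le hT (hinner_sq.intervalIntegrable 0 T)
      ((hmaj.pow 2).intervalIntegrable 0 T)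
      (fun s hs => (mul_nonneg (exp_pos _).le (hmaj_nonneg hs)).trans (hlower hs)) fun s hs =>
        integral_exp_mul_rpow_sub_one_le ha hβ (by linarith [hs.2])

theorem tendsto_sqrt_integral_sq_kernel (ha : 0 < a) (hβ : 0 ≤ β) :
    Tendsto (fun T : ℝ => 1 / T ^ (a + 1 / 2) *
        √(∫ s in (0:ℝ)..T, (∫ u in s..T, exp (-β * (u - s)) * (u - s) ^ (a - 1)) ^ 2))
      (𝓝[>] 0) (𝓝 (1 / (a * √(2 * a + 1)))) := by
  set c := 1 / (a * √(2 * a + 1))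
  have hlim : Tendsto (fun T : ℝ => exp (-β * T) * c) (𝓝[>] 0) (𝓝 c) := by
    have h0 : Tendsto (fun T : ℝ => exp (-β * T) * c) (𝓝 0) (𝓝 (exp (-β * 0) * c)) :=
      (by fun_prop : Continuous fun T : ℝ => exp (-β * T) * c).tendsto 0
    simpa using h0.mono_left nhdsWithin_le_nhds
  refine tendsto_of_tendsto_of_tendsto_of_le_of_le' hlim tendsto_const_nhds ?_ ?_ <;>
    filter_upwards [self_mem_nhdsWithin] with T (hT : 0 < T) <;>
    obtain ⟨hlow, hupp⟩ := sqrt_integral_sq_kernel_bounds ha hβ hT.le <;>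
    rw [one_div_mul_eq_div]
  · rw [le_div_iff₀ (rpow_pos_of_pos hT _)]
    linear_combination hlow
  · rw [div_le_iff₀ (rpow_pos_of_pos hT _)]
    linear_combination hupp

end

theorem rough_kernel_atm_level_exp_general (H β : ℝ) (hH1 : 0 < H) (hβ : 0 ≤ β) :
    Filter.Tendsto
      (fun T : ℝ =>
        (1 / T ^ (1 + H)) *
          Real.sqrt (∫ s in (0:ℝ)..T,
            (∫ u in s..T, Real.exp (-β * (u - s)) * (u - s) ^ (H - 1 / 2)) ^ 2))
      (nhdsWithin 0 (Set.Ioi 0))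
      (nhds (1 / ((H + 1 / 2) * Real.sqrt (2 * H + 2)))) := by
  rw [show H - 1 / 2 = H + 1 / 2 - 1 by ring, show 1 + H = H + 1 / 2 + 1 / 2 by ring,
    show 2 * H + 2 = 2 * (H + 1 / 2) + 1 by ring]
  exact tendsto_sqrt_integral_sq_kernel (by linarith) hβ

/-- for `H ∈ (0,1/2)` and `β ≥ 0`,
`(1/T^{1+H}) √(∫₀^T (∫ₛ^T e^{−β(u−s)} (u−s)^{H−1/2} du)² ds) → 1/((H+1/2)√(2H+2))`
as `T → 0⁺`; in particular the limit does not depend on `β`. -/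
theorem rough_kernel_atm_level_exp (H β : ℝ) (hH1 : 0 < H) (hH2 : H < 1 / 2)
    (hβ : 0 ≤ β) :
    Filter.Tendsto
      (fun T : ℝ =>
        (1 / T ^ (1 + H)) *
          Real.sqrt (∫ s in (0:ℝ)..T,
            (∫ u in s..T, Real.exp (-β * (u - s)) * (u - s) ^ (H - 1 / 2)) ^ 2))
      (nhdsWithin 0 (Set.Ioi 0))
      (nhds (1 / ((H + 1 / 2) * Real.sqrt (2 * H + 2)))) :=
  rough_kernel_atm_level_exp_general H β hH1 hβ
end

section
/- Let H ∈ (0, 1/2), Δ > 0, and let g : [0,∞) → ℝ be continuous and bounded. Then lim_{T→0⁺} (1/√T) · √( ∫_0^T ( ∫_T^{T+Δ} (r−s)^{H−1/2} g(r−s) dr )² ds ) = | ∫_0^Δ u^{H−1/2} g(u) du |. -/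
open Real MeasureTheory Filter Set Topology

/-! With `k u = u ^ (H - 1/2) * g u` and `Φ x = ∫₀ˣ k`, the substitution `u = r - s` turns the
inner integral into `Φ (T + Δ - s) - Φ (T - s)`. Since `H - 1/2 > -1`, `k` is locally integrable
on `[0, ∞)`, so `Φ` is continuous there; for `s ∈ [0, T]` the two arguments lie in `[Δ, Δ + T]`
and `[0, T]`, so the integrand tends to `Φ Δ - Φ 0 = Φ Δ` uniformly in `s` as `T → 0⁺`. Finally, a
function within `ε` of `L` on `[0, T]` has root mean square within `ε` of `|L|`. -/

theorem intervalIntegral.continuousOn_primitive_Ici {E : Type*} [NormedAddCommGroup E]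
    [NormedSpace ℝ E] {μ : Measure ℝ} [NullSingletonClass μ] {f : ℝ → E} {a : ℝ}
    (h_int : ∀ b, a ≤ b → IntervalIntegrable f μ a b) :
    ContinuousOn (fun x => ∫ t in a..x, f t ∂μ) (Ici a) := by
  intro x hx
  have hIcc : ContinuousWithinAt (fun x => ∫ t in a..x, f t ∂μ) (Icc a (x + 1)) x :=
    intervalIntegral.continuousWithinAt_primitive (measure_singleton x) (by
      rw [min_self, max_eq_right (by linarith [mem_Ici.1 hx])]
      exact h_int _ (by linarith [mem_Ici.1 hx]))
  refine hIcc.mono_of_mem_nhdsWithin ?_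
  rw [← Ici_inter_Iic]
  exact inter_mem_nhdsWithin _ (Iic_mem_nhds (lt_add_one x))

theorem intervalIntegrable_rpow_mul {p : ℝ} (hp : -1 < p) {g : ℝ → ℝ}
    (hg : ContinuousOn g (Ici 0)) {a b : ℝ} (ha : 0 ≤ a) (hb : 0 ≤ b) :
    IntervalIntegrable (fun u => u ^ p * g u) volume a b :=
  (intervalIntegral.intervalIntegrable_rpow' hp).mul_continuousOn
    (hg.mono fun _ hu => le_trans (le_min ha hb) hu.1)

theorem ContinuousWithinAt.eventually_mapsTo_Icc {α : Type*} [TopologicalSpace α] {f : ℝ → α}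
    {a : ℝ} (hf : ContinuousWithinAt f (Ici a) a) {U : Set α} (hU : U ∈ 𝓝 (f a)) :
    ∀ᶠ T in 𝓝 0, MapsTo f (Icc a (a + T)) U := by
  obtain ⟨u, hau, hsub⟩ := mem_nhdsGE_iff_exists_Icc_subset.1 (hf hU)
  filter_upwards [Iio_mem_nhds (sub_pos.2 hau)] with T hT
  exact fun x hx => hsub ⟨hx.1, by linarith [hx.2, mem_Iio.1 hT]⟩

theorem ContinuousOn.eventually_forall_abs_sub_sub_le {Φ : ℝ → ℝ} (hΦ : ContinuousOn Φ (Ici 0))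
    {Δ : ℝ} (hΔ : 0 ≤ Δ) {ε : ℝ} (hε : 0 < ε) :
    ∀ᶠ T in 𝓝 0, ∀ s ∈ Icc 0 T, |Φ (T + Δ - s) - Φ (T - s) - (Φ Δ - Φ 0)| ≤ ε := by
  have hclose0 := (hΦ 0 self_mem_Ici).eventually_mapsTo_Icc
    (Metric.closedBall_mem_nhds (Φ 0) (half_pos hε))
  have hcloseΔ := ((hΦ Δ hΔ).mono (Ici_subset_Ici.2 hΔ)).eventually_mapsTo_Icc
    (Metric.closedBall_mem_nhds (Φ Δ) (half_pos hε))
  filter_upwards [hclose0, hcloseΔ] with T hT0 hTΔ s hs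
  have hnear0 := hT0 (show T - s ∈ Icc 0 (0 + T) by constructor <;> linarith [hs.1, hs.2])
  have hnearΔ := hTΔ (show T + Δ - s ∈ Icc Δ (Δ + T) by constructor <;> linarith [hs.1, hs.2])
  rw [Metric.mem_closedBall, Real.dist_eq, abs_le] at hnear0 hnearΔ
  rw [abs_le]
  constructor <;> linarith [hnear0.1, hnear0.2, hnearΔ.1, hnearΔ.2]

theorem dist_sqrt_integral_sq_div_le {F : ℝ → ℝ} {T L ε : ℝ} (hT : 0 < T)
    (hF : ContinuousOn F (Icc 0 T)) (hε : ∀ s ∈ Icc 0 T, |F s - L| ≤ ε) :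
    dist √((∫ s in 0..T, F s ^ 2) / T) |L| ≤ ε := by
  have hint : IntervalIntegrable (fun s => F s ^ 2) volume 0 T :=
    (hF.pow 2).intervalIntegrable_of_Icc hT.le
  have habs (s : ℝ) (hs : s ∈ Icc 0 T) : |L| - ε ≤ |F s| ∧ |F s| ≤ |L| + ε := by
    have := hε s hs
    constructor <;> linarith [abs_sub_abs_le_abs_sub (F s) L, abs_sub_abs_le_abs_sub L (F s),
      abs_sub_comm (F s) L]
  have hupper : √((∫ s in 0..T, F s ^ 2) / T) ≤ |L| + ε := by
    refine Real.sqrt_le_iff.2 ⟨le_trans (abs_nonneg _) (habs 0 ⟨le_rfl, hT.le⟩).2, ?_⟩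
    rw [div_le_iff₀ hT]
    have := intervalIntegral.integral_mono_on hT.le hint intervalIntegrable_const
      fun s hs => (sq_abs (F s)).symm.trans_le (pow_le_pow_left₀ (abs_nonneg _) (habs s hs).2 2)
    simpa [mul_comm] using this
  have hlower : |L| - ε ≤ √((∫ s in 0..T, F s ^ 2) / T) := by
    rcases le_or_gt (|L| - ε) 0 with hneg | hpos
    · exact hneg.trans (Real.sqrt_nonneg _)
    refine Real.le_sqrt_of_sq_le ((le_div_iff₀ hT).2 ?_)
    have := intervalIntegral.integral_mono_on hT.le intervalIntegrable_const hint
      fun s hs => (pow_le_pow_left₀ hpos.le (habs s hs).1 2).trans (sq_abs (F s)).le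
    simpa [mul_comm] using this
  rw [Real.dist_eq, abs_le]
  constructor <;> linarith

theorem tendsto_sqrt_integral_sq_div {F : ℝ → ℝ → ℝ} {L : ℝ}
    (hF : ∀ T > 0, ContinuousOn (F T) (Icc 0 T))
    (hunif : ∀ ε > 0, ∀ᶠ T in 𝓝[>] 0, ∀ s ∈ Icc 0 T, |F T s - L| ≤ ε) :
    Tendsto (fun T => 1 / √T * √(∫ s in 0..T, F T s ^ 2)) (𝓝[>] 0) (𝓝 |L|) := by
  rw [Metric.tendsto_nhds]
  intro ε hε
  filter_upwards [hunif (ε / 2) (half_pos hε), self_mem_nhdsWithin] with T hT hTpos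
  rw [one_div_mul_eq_div, ← Real.sqrt_div' _ (le_of_lt hTpos)]
  exact (dist_sqrt_integral_sq_div_le hTpos (hF T hTpos) hT).trans_lt (half_lt_self hε)

theorem VIX_kernel_atm_level_general (H Δ : ℝ) (hH1 : 0 < H) (hΔ : 0 < Δ)
    (g : ℝ → ℝ) (hg_cont : ContinuousOn g (Set.Ici 0)) :
    Filter.Tendsto
      (fun T : ℝ =>
        (1 / Real.sqrt T) *
          Real.sqrt (∫ s in (0:ℝ)..T,
            (∫ r in T..(T + Δ), (r - s) ^ (H - 1 / 2) * g (r - s)) ^ 2))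
      (nhdsWithin 0 (Set.Ioi 0))
      (nhds |∫ u in (0:ℝ)..Δ, u ^ (H - 1 / 2) * g u|) := by
  set k : ℝ → ℝ := fun u => u ^ (H - 1 / 2) * g u
  have hk_int (b : ℝ) (hb : 0 ≤ b) : IntervalIntegrable k volume 0 b :=
    intervalIntegrable_rpow_mul (by linarith) hg_cont le_rfl hb
  set Φ : ℝ → ℝ := fun x => ∫ u in 0..x, k u
  have hΦ : ContinuousOn Φ (Ici 0) := intervalIntegral.continuousOn_primitive_Ici hk_int
  have hinner (T s : ℝ) (hs : s ∈ Icc 0 T) :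
      ∫ r in T..T + Δ, (r - s) ^ (H - 1 / 2) * g (r - s) = Φ (T + Δ - s) - Φ (T - s) := by
    rw [intervalIntegral.integral_comp_sub_right k s,
      intervalIntegral.integral_interval_sub_left (hk_int _ (by linarith [hs.2]))
        (hk_int _ (by linarith [hs.2]))]
  have hF_cont (T : ℝ) : ContinuousOn (fun s => Φ (T + Δ - s) - Φ (T - s)) (Icc 0 T) := by
    refine ContinuousOn.sub (hΦ.comp (by fun_prop) fun s hs => ?_)
      (hΦ.comp (by fun_prop) fun s hs => ?_) <;> simp only [mem_Ici] <;> linarith [hs.2]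
  have hlim := tendsto_sqrt_integral_sq_div (fun T _ => hF_cont T)
    (fun ε hε => nhdsWithin_le_nhds (hΦ.eventually_forall_abs_sub_sub_le hΔ.le hε))
  rw [show Φ 0 = 0 from intervalIntegral.integral_same, sub_zero] at hlim
  refine hlim.congr' ?_
  filter_upwards [self_mem_nhdsWithin] with T (hT : 0 < T)
  refine congrArg (fun X => 1 / √T * √X) (intervalIntegral.integral_congr fun s hs => ?_)
  rw [hinner T s (by rwa [uIcc_of_le hT.le] at hs)]

/-- for `H ∈ (0,1/2)`, `Δ > 0` and `g` continuous and bounded on `[0,∞)`,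
`(1/√T) √(∫₀^T (∫_T^{T+Δ} (r−s)^{H−1/2} g(r−s) dr)² ds) → |∫₀^Δ u^{H−1/2} g(u) du|`
as `T → 0⁺`. -/
theorem VIX_kernel_atm_level (H Δ : ℝ) (hH1 : 0 < H) (hH2 : H < 1 / 2) (hΔ : 0 < Δ)
    (g : ℝ → ℝ) (hg_cont : ContinuousOn g (Set.Ici 0))
    (hg_bdd : ∃ C : ℝ, ∀ u : ℝ, 0 ≤ u → |g u| ≤ C) :
    Filter.Tendsto
      (fun T : ℝ =>
        (1 / Real.sqrt T) *
          Real.sqrt (∫ s in (0:ℝ)..T,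
            (∫ r in T..(T + Δ), (r - s) ^ (H - 1 / 2) * g (r - s)) ^ 2))
      (nhdsWithin 0 (Set.Ioi 0))
      (nhds |∫ u in (0:ℝ)..Δ, u ^ (H - 1 / 2) * g u|) :=
  VIX_kernel_atm_level_general H Δ hH1 hΔ g hg_cont
end

section
/- Let H ∈ (0, 1/2], β ≥ 0 and Δ > 0. Define K(T, t) = ∫_T^{T+Δ} (r−t)^{H−1/2} e^{−β(r−t)} dr for 0 ≤ t ≤ T, and J = ∫_0^Δ u^{H−1/2} e^{−βu} du. Then lim_{T→0⁺} (1/T²) · ∫_0^T K(T,s)² ( ∫_s^T K(T,u)² du ) ds = J⁴ / 2. -/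
/-!
Writing `f u = u^(H-1/2) e^(-βu)` (locally integrable since `H - 1/2 > -1`) and
`F a = ∫_a^{a+Δ} f`, the substitution `r ↦ r - t` gives `K(T,t) = F(T-t)`, and `F` is continuous
with `F 0 = J`. For continuous `g`, `s ↦ -(∫_s^T g)²/2` is an antiderivative of
`g s · ∫_s^T g`, so the double integral collapses to `(∫_0^T F²)²/2`. Dividing by `T²`, this is
`((1/T) ∫_0^T F²)²/2 → F(0)⁴/2 = J⁴/2`.
-/

open MeasureTheory Filter Topology

theorem integral_mul_integral_tail_eq_sq_div_two {g : ℝ → ℝ} (hg : Continuous g) (a b : ℝ) :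
    ∫ s in a..b, g s * ∫ u in s..b, g u = (∫ s in a..b, g s) ^ 2 / 2 := by
  have htail : Continuous fun s => ∫ u in s..b, g u :=
    (intervalIntegral.continuous_primitive hg.intervalIntegrable b).neg.congr fun s =>
      (intervalIntegral.integral_symm b s).symm
  have hderiv : ∀ s, HasDerivAt (fun s => -(∫ u in s..b, g u) ^ 2 / 2)
      (g s * ∫ u in s..b, g u) s := fun s => by
    have h := intervalIntegral.integral_hasDerivAt_left (hg.intervalIntegrable s b)
      hg.aestronglyMeasurable.stronglyMeasurableAtFilter hg.continuousAt
    exact ((h.pow 2).neg.div_const 2).congr_deriv (by push_cast; ring)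
  rw [intervalIntegral.integral_eq_sub_of_hasDerivAt (fun s _ => hderiv s)
    ((hg.mul htail).intervalIntegrable a b), intervalIntegral.integral_same]
  ring

theorem tendsto_integral_div_nhdsGT_zero {g : ℝ → ℝ} (hg : Continuous g) :
    Tendsto (fun T => (∫ x in (0:ℝ)..T, g x) / T) (𝓝[>] 0) (𝓝 (g 0)) := by
  have h := hasDerivAt_iff_tendsto_slope.mp <|
    intervalIntegral.integral_hasDerivAt_right (hg.intervalIntegrable 0 0)
      hg.aestronglyMeasurable.stronglyMeasurableAtFilter hg.continuousAt
  refine (h.mono_left (nhdsWithin_mono 0 fun x hx => ne_of_gt hx)).congr fun T => ?_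
  simp [slope_def_field]

theorem continuous_integral_add_const {f : ℝ → ℝ}
    (hf : ∀ a b, IntervalIntegrable f volume a b) (c : ℝ) :
    Continuous fun a => ∫ u in a..a + c, f u := by
  have hprim := intervalIntegral.continuous_primitive hf 0
  refine ((hprim.comp (continuous_add_const c)).sub hprim).congr fun a => ?_
  exact intervalIntegral.integral_interval_sub_left (hf 0 _) (hf 0 a)

theorem tendsto_integral_sq_mul_integral_sq_div_sq {F : ℝ → ℝ} (hF : Continuous F) :
    Tendsto (fun T => 1 / T ^ 2 * ∫ s in (0:ℝ)..T, F (T - s) ^ 2 * ∫ u in s..T, F (T - u) ^ 2)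
      (𝓝[>] 0) (𝓝 (F 0 ^ 4 / 2)) := by
  have hreflect : ∀ T, ∫ s in (0:ℝ)..T, F (T - s) ^ 2 = ∫ x in (0:ℝ)..T, F x ^ 2 := fun T => by
    simpa using intervalIntegral.integral_comp_sub_left (a := 0) (b := T) (fun x => F x ^ 2) T
  have hF2 : Continuous fun x => F x ^ 2 := hF.pow 2
  have hlim := ((tendsto_integral_div_nhdsGT_zero hF2).pow 2).div_const 2
  rw [← pow_mul] at hlim
  refine hlim.congr' ?_
  filter_upwards [self_mem_nhdsWithin] with T hT
  rw [integral_mul_integral_tail_eq_sq_div_two (g := fun s => F (T - s) ^ 2) (by fun_prop),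
    hreflect]
  field_simp

theorem VIX_skew_B_term_limit_general (H β Δ : ℝ) (hH1 : 0 < H)
    (K : ℝ → ℝ → ℝ)
    (hK : ∀ T t : ℝ, K T t = ∫ r in T..(T + Δ), (r - t) ^ (H - 1 / 2) *
      Real.exp (-β * (r - t)))
    (J : ℝ) (hJ : J = ∫ u in (0:ℝ)..Δ, u ^ (H - 1 / 2) * Real.exp (-β * u)) :
    Filter.Tendsto
      (fun T : ℝ =>
        (1 / T ^ 2) * ∫ s in (0:ℝ)..T, (K T s) ^ 2 * ∫ u in s..T, (K T u) ^ 2)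
      (nhdsWithin 0 (Set.Ioi 0)) (nhds (J ^ 4 / 2)) := by
  set f : ℝ → ℝ := fun u => u ^ (H - 1 / 2) * Real.exp (-β * u)
  have hf : ∀ a b, IntervalIntegrable f volume a b := fun a b =>
    (intervalIntegral.intervalIntegrable_rpow' (by linarith)).mul_continuousOn (by fun_prop)
  have hKf : ∀ T t, K T t = ∫ u in (T - t)..(T - t) + Δ, f u := fun T t => by
    rw [hK, intervalIntegral.integral_comp_sub_right (fun u => f u), sub_add_eq_add_sub]
  have hlim := tendsto_integral_sq_mul_integral_sq_div_sq (continuous_integral_add_const hf Δ)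
  simpa only [hKf, zero_add, ← hJ] using hlim

/-- with `K(T,t) = ∫_T^{T+Δ} (r−t)^{H−1/2} e^{−β(r−t)} dr` and
`J = ∫₀^Δ u^{H−1/2} e^{−βu} du`, one has
`(1/T²) ∫₀^T K(T,s)² (∫ₛ^T K(T,u)² du) ds → J⁴/2` as `T → 0⁺`. -/
theorem VIX_skew_B_term_limit (H β Δ : ℝ) (hH1 : 0 < H) (hH2 : H ≤ 1 / 2)
    (hβ : 0 ≤ β) (hΔ : 0 < Δ)
    (K : ℝ → ℝ → ℝ)
    (hK : ∀ T t : ℝ, K T t = ∫ r in T..(T + Δ), (r - t) ^ (H - 1 / 2) *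
      Real.exp (-β * (r - t)))
    (J : ℝ) (hJ : J = ∫ u in (0:ℝ)..Δ, u ^ (H - 1 / 2) * Real.exp (-β * u)) :
    Filter.Tendsto
      (fun T : ℝ =>
        (1 / T ^ 2) * ∫ s in (0:ℝ)..T, (K T s) ^ 2 * ∫ u in s..T, (K T u) ^ 2)
      (nhdsWithin 0 (Set.Ioi 0)) (nhds (J ^ 4 / 2)) :=
  VIX_skew_B_term_limit_general H β Δ hH1 K hK J hJ
end
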